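/- arXiv:math/0407016 — 2 statements merged into one kernel-verified Lean document; each statement's English description precedes it below -/
import Mathlib

section
/- Consider the alphabet {a, b} with a < b, and for each n let P̃_n be the uniform probability on the set of Lyndon words of length n, and M_n the length of the longest run. For every ε > 0, P̃_n(M_n ≤ (1−ε)·log₂ n) = O(exp(−n^ε/4)) as n → ∞; that is, there exist K > 0 and n_0 such that for all n ≥ n_0, P̃_n(M_n ≤ (1−ε)·log₂ n) ≤ K·exp(−n^ε/4). -/
open scoped Classical

/-- A Lyndon word: strictly smaller, in lexicographic order, than each of its
proper (nonempty) suffixes. -/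
def IsLyndon {α : Type*} [LinearOrder α] (w : List α) : Prop :=
  ∀ i, 0 < i → i < w.length → List.Lex (· < ·) w (w.drop i)

/-- The finite set of Lyndon words of length `n` over a totally ordered alphabet
with `q` letters, encoded as functions `Fin n → Fin q`. -/
noncomputable def lyndonWords (q n : ℕ) : Finset (Fin n → Fin q) :=
  Finset.univ.filter fun w => IsLyndon (List.ofFn w)

/-- The length of the longest run of a word: the largest m such that a block of
 consecutive equal letters occurs in the word. -/
noncomputable def maxRun {α : Type*} (l : List α) : ℕ :=
  sSup {m | ∃ c, List.replicate m c <:+: l}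

/-!
A binary word whose runs all have length at most `m` is determined by the length `r ≤ m` of
its first run and the remaining word, so there are at most `2 (2 - 2⁻ᵐ)ⁿ ≤ 2 · 2ⁿ exp (-n / 2ᵐ⁺¹)`
of them; for `m = (1 - ε) log₂ n` this is `2 · 2ⁿ exp (-n^ε / 2)`. On the other side, every word
`0ᴹ 1 t 1` in which `t` contains no block `0ᴹ` is Lyndon, and for `M = log₂ n + 3` a union bound
leaves at least `2ⁿ / (64 n)` such words. The proportion is thus `O (n exp (-n^ε / 2))`, which is
`O (exp (-n^ε / 4))`.
-/

open Finset

/-- Letter `k` of `w`, read as `0` past the end of the word. -/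
def wordAt {n : ℕ} (w : Fin n → Fin 2) (k : ℕ) : Fin 2 :=
  if h : k < n then w ⟨k, h⟩ else 0

theorem wordAt_of_lt {n : ℕ} (w : Fin n → Fin 2) {k : ℕ} (h : k < n) :
    wordAt w k = w ⟨k, h⟩ := dif_pos h

theorem wordAt_injective {n : ℕ} : Function.Injective (wordAt (n := n)) := by
  intro w w' h
  funext k
  simpa only [wordAt_of_lt _ k.isLt] using congrFun h k

theorem Fin.two_eq_of_ne {a b c : Fin 2} (ha : a ≠ c) (hb : b ≠ c) : a = b := by
  revert a b c; decide

theorem le_maxRun {α : Type*} {l : List α} {k : ℕ} {c : α}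
    (h : List.replicate k c <:+: l) : k ≤ maxRun l :=
  le_csSup ⟨l.length, fun _ ⟨_, hc⟩ => by simpa using hc.length_le⟩ ⟨c, h⟩

theorem one_le_maxRun {α : Type*} {l : List α} (hl : l ≠ []) : 1 ≤ maxRun l := by
  obtain ⟨c, s, rfl⟩ := List.exists_cons_of_ne_nil hl
  exact le_maxRun (c := c) ⟨[], s, rfl⟩

/-- Binary words of length `n` all of whose runs have length at most `m`. -/
noncomputable def shortRunWords (m n : ℕ) : Finset (Fin n → Fin 2) :=
  univ.filter fun w => ∀ i, i + m < n → ∃ j ≤ m, wordAt w (i + j) ≠ wordAt w i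

theorem mem_shortRunWords_of_maxRun_le {m n : ℕ} {w : Fin n → Fin 2}
    (h : maxRun (List.ofFn w) ≤ m) : w ∈ shortRunWords m n := by
  simp only [shortRunWords, mem_filter, mem_univ, true_and]
  intro i hi
  by_contra! hrun
  have hinfix : List.replicate (m + 1) (wordAt w i) <:+: List.ofFn w := by
    refine List.infix_iff_getElem?.mpr ⟨i, by simp; omega, fun j hj => ?_⟩
    simp only [List.length_replicate] at hj
    rw [List.getElem_replicate, ← hrun j (by omega), wordAt_of_lt w (by omega),
      List.getElem?_ofFn, add_comm]
    simp [show i + j < n by omega]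
  have := le_maxRun hinfix
  omega

/-- `0` when `w` is constant. -/
noncomputable def firstChange {n : ℕ} (w : Fin n → Fin 2) : ℕ :=
  if h : ∃ k, wordAt w k ≠ wordAt w 0 then Nat.find h else 0

theorem firstChange_spec {n : ℕ} {w : Fin n → Fin 2} (h : ∃ k, wordAt w k ≠ wordAt w 0) :
    wordAt w (firstChange w) ≠ wordAt w 0 ∧ ∀ k < firstChange w, wordAt w k = wordAt w 0 := by
  rw [firstChange, dif_pos h]
  exact ⟨Nat.find_spec h, fun k hk => not_not.mp (Nat.find_min h hk)⟩

def dropWord {n : ℕ} (r : ℕ) (w : Fin n → Fin 2) : Fin (n - r) → Fin 2 :=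
  fun k => wordAt w (r + k)

theorem wordAt_dropWord {n : ℕ} (r : ℕ) (w : Fin n → Fin 2) (k : ℕ) :
    wordAt (dropWord r w) k = wordAt w (r + k) := by
  by_cases hk : k < n - r
  · rw [wordAt_of_lt _ hk]; rfl
  · rw [wordAt, dif_neg hk, wordAt, dif_neg (by omega)]

/-- Cutting off the first run: `w ↦ (firstChange w, dropWord (firstChange w) w)` is
injective on `shortRunWords m n`, because over a binary alphabet the first run of `w` is
determined by its length and the letter that follows it. -/
theorem card_shortRunWords_le_sum {m n : ℕ} (hmn : m < n) :
    #(shortRunWords m n) ≤ ∑ r ∈ Icc 1 m, #(shortRunWords m (n - r)) := by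
  rw [← card_sigma]
  have hchange : ∀ w ∈ shortRunWords m n, ∃ k, wordAt w k ≠ wordAt w 0 := by
    intro w hw
    simp only [shortRunWords, mem_filter, mem_univ, true_and] at hw
    obtain ⟨j, -, hj⟩ := hw 0 (by omega)
    exact ⟨j, by simpa using hj⟩
  refine card_le_card_of_injOn (fun w => ⟨firstChange w, dropWord (firstChange w) w⟩)
    (fun w hw => ?_) (fun w hw w' hw' heq => ?_)
  · have hwindows := hw
    simp only [shortRunWords, coe_filter, Set.mem_ofPred_eq, mem_univ, true_and] at hwindows
    obtain ⟨j, hjm, hj⟩ := hwindows 0 (by omega)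
    obtain ⟨hne, hmin⟩ := firstChange_spec (hchange w hw)
    have hpos : 0 < firstChange w := Nat.pos_of_ne_zero fun h => hne (by rw [h])
    have hle : firstChange w ≤ m := by
      by_contra! hlt
      exact hj (by simpa using hmin j (by omega))
    simp only [coe_sigma, Set.mem_sigma_iff, coe_Icc, Set.mem_Icc, shortRunWords,
      coe_filter, Set.mem_ofPred_eq, mem_univ, true_and, wordAt_dropWord]
    refine ⟨⟨hpos, hle⟩, fun i hi => ?_⟩
    simpa only [add_assoc] using hwindows (firstChange w + i) (by omega)
  · obtain ⟨hne, hmin⟩ := firstChange_spec (hchange w hw)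
    obtain ⟨hne', hmin'⟩ := firstChange_spec (hchange w' hw')
    have hr : firstChange w = firstChange w' := congrArg Sigma.fst heq
    have htail : ∀ k, wordAt w (firstChange w + k) = wordAt w' (firstChange w + k) := by
      intro k
      have := congrFun (congrArg (fun p : Σ r, Fin (n - r) → Fin 2 => wordAt p.2) heq) k
      simpa only [wordAt_dropWord, ← hr] using this
    refine wordAt_injective (funext fun k => ?_)
    have hfirst : wordAt w 0 = wordAt w' 0 := by
      refine Fin.two_eq_of_ne (c := wordAt w (firstChange w)) hne.symm ?_
      rw [← add_zero (firstChange w), htail 0, add_zero, hr]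
      exact hne'.symm
    rcases lt_or_ge k (firstChange w) with hk | hk
    · rw [hmin k hk, hmin' k (hr ▸ hk), hfirst]
    · simpa [Nat.add_sub_cancel' hk] using htail (k - firstChange w)

theorem sum_Icc_pow_sub_le_pow {μ : ℝ} {m n : ℕ} (hμ : 1 < μ) (h : μ ^ m * (2 - μ) ≤ 1)
    (hmn : m ≤ n) : ∑ r ∈ Icc 1 m, μ ^ (n - r) ≤ μ ^ n := by
  have hsum : ∑ r ∈ Icc 1 m, μ ^ (n - r) = μ ^ (n - m) * ∑ k ∈ range m, μ ^ k := by
    rw [mul_sum, ← sum_range_reflect, ← Ico_add_one_right_eq_Icc, sum_Ico_eq_sum_range]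
    refine sum_congr rfl fun k hk => ?_
    rw [mem_range] at hk
    rw [← pow_add]
    congr 1
    omega
  have hgeom := geom_sum_mul μ m
  have hsplit : μ ^ n = μ ^ (n - m) * μ ^ m := by rw [← pow_add, Nat.sub_add_cancel hmn]
  have hpos : 0 < μ ^ (n - m) := by positivity
  rw [hsum, hsplit]
  refine mul_le_mul_of_nonneg_left ?_ hpos.le
  nlinarith

theorem two_pow_le_two_mul_pow {m n : ℕ} (hnm : n ≤ m) :
    (2 : ℝ) ^ n ≤ 2 * (2 - (1 / 2) ^ m) ^ n := by
  have hlt : (n : ℝ) < 2 ^ m := by exact_mod_cast hnm.trans_lt m.lt_two_pow_self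
  have hn : (n : ℝ) * (1 / 2) ^ (m + 1) ≤ 1 / 2 := by
    have : (n : ℝ) * (1 / 2) ^ m < 1 := by
      calc (n : ℝ) * (1 / 2) ^ m < 2 ^ m * (1 / 2) ^ m := by gcongr
        _ = 1 := by rw [← mul_pow]; norm_num
    rw [pow_succ, ← mul_assoc]
    linarith
  have hsmall : (1 / 2 : ℝ) ^ (m + 1) ≤ 1 := pow_le_one₀ (by norm_num) (by norm_num)
  have hbernoulli : 1 - n * (1 / 2 : ℝ) ^ (m + 1) ≤ (1 - (1 / 2) ^ (m + 1)) ^ n := by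
    simpa [sub_eq_add_neg] using one_add_mul_le_pow (a := -(1 / 2 : ℝ) ^ (m + 1)) (by linarith) n
  calc (2 : ℝ) ^ n ≤ 2 * (2 ^ n * (1 - (1 / 2) ^ (m + 1)) ^ n) := by
        nlinarith [pow_pos (two_pos (α := ℝ)) n]
    _ = 2 * (2 - (1 / 2) ^ m) ^ n := by rw [← mul_pow]; ring

/-- With `λ = 2 - 2⁻ᵐ`, the bound `2 λⁿ` holds trivially for `n ≤ m` and propagates through
`card_shortRunWords_le_sum` since `λ⁻¹ + ⋯ + λ⁻ᵐ ≤ 1`. -/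
theorem card_shortRunWords_le {m : ℕ} (hm : 1 ≤ m) (n : ℕ) :
    (#(shortRunWords m n) : ℝ) ≤ 2 * (2 - (1 / 2) ^ m) ^ n := by
  induction n using Nat.strong_induction_on with
  | _ n ih =>
    rcases le_or_gt n m with hnm | hmn
    · calc (#(shortRunWords m n) : ℝ) ≤ 2 ^ n := by
            exact_mod_cast (card_le_univ _).trans_eq (by simp)
        _ ≤ _ := two_pow_le_two_mul_pow hnm
    · have hlam : (3 / 2 : ℝ) ≤ 2 - (1 / 2) ^ m := by
        have := pow_le_pow_of_le_one (by norm_num : (0 : ℝ) ≤ 1 / 2) (by norm_num) hm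
        linarith [pow_one (1 / 2 : ℝ)]
      have hgeom : (2 - (1 / 2 : ℝ) ^ m) ^ m * (2 - (2 - (1 / 2) ^ m)) ≤ 1 := by
        rw [sub_sub_cancel, ← mul_pow]
        exact pow_le_one₀ (by positivity) (by linarith [pow_pos (half_pos one_pos (α := ℝ)) m])
      calc (#(shortRunWords m n) : ℝ) ≤ ∑ r ∈ Icc 1 m, (#(shortRunWords m (n - r)) : ℝ) := by
            exact_mod_cast card_shortRunWords_le_sum hmn
        _ ≤ ∑ r ∈ Icc 1 m, 2 * (2 - (1 / 2 : ℝ) ^ m) ^ (n - r) :=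
            sum_le_sum fun r hr => ih (n - r) (by simp at hr; omega)
        _ ≤ 2 * (2 - (1 / 2) ^ m) ^ n := by
            rw [← mul_sum]
            gcongr
            exact sum_Icc_pow_sub_le_pow (by linarith) hgeom hmn.le

theorem two_sub_half_pow_pow_le (m n : ℕ) :
    (2 - (1 / 2 : ℝ) ^ m) ^ n ≤ 2 ^ n * Real.exp (-n / 2 ^ (m + 1)) := by
  have hone : 1 - (1 / 2 : ℝ) ^ (m + 1) ≤ Real.exp (-(1 / 2) ^ (m + 1)) := by
    linarith [Real.add_one_le_exp (-(1 / 2 : ℝ) ^ (m + 1))]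
  have hnonneg : 0 ≤ 1 - (1 / 2 : ℝ) ^ (m + 1) :=
    sub_nonneg.mpr (pow_le_one₀ (by norm_num) (by norm_num))
  calc (2 - (1 / 2 : ℝ) ^ m) ^ n = 2 ^ n * (1 - (1 / 2) ^ (m + 1)) ^ n := by
        rw [← mul_pow]; ring
    _ ≤ 2 ^ n * Real.exp (-(1 / 2) ^ (m + 1)) ^ n := by gcongr
    _ = 2 ^ n * Real.exp (-n / 2 ^ (m + 1)) := by
        rw [← Real.exp_nat_mul, one_div_pow]; ring_nf

theorem card_filter_maxRun_le {n : ℕ} (hn : 1 ≤ n) (x : ℝ) :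
    (#(univ.filter fun w : Fin n → Fin 2 => (maxRun (List.ofFn w) : ℝ) ≤ x) : ℝ) ≤
      2 * 2 ^ n * Real.exp (-n / 2 ^ (x + 1)) := by
  rcases lt_or_ge x 1 with hx | hx
  · have hempty : (univ.filter fun w : Fin n → Fin 2 => (maxRun (List.ofFn w) : ℝ) ≤ x) = ∅ := by
      refine filter_false_of_mem fun w _ => not_le.mpr (hx.trans_le ?_)
      exact_mod_cast one_le_maxRun (by simp; omega)
    rw [hempty, card_empty, Nat.cast_zero]
    positivity
  set m := ⌊x⌋₊
  have hm : 1 ≤ m := Nat.le_floor (by exact_mod_cast hx)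
  have hsub : (univ.filter fun w : Fin n → Fin 2 => (maxRun (List.ofFn w) : ℝ) ≤ x) ⊆
      shortRunWords m n := fun w hw =>
    mem_shortRunWords_of_maxRun_le (Nat.le_floor (mem_filter.mp hw).2)
  have hpow : (2 : ℝ) ^ (m + 1) ≤ 2 ^ (x + 1) := by
    rw [← Real.rpow_natCast, Nat.cast_add_one]
    exact Real.rpow_le_rpow_of_exponent_le one_le_two
      (by linarith [Nat.floor_le (by linarith : 0 ≤ x)])
  calc _ ≤ (#(shortRunWords m n) : ℝ) := by exact_mod_cast card_le_card hsub
    _ ≤ 2 * (2 - (1 / 2) ^ m) ^ n := card_shortRunWords_le hm n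
    _ ≤ 2 * (2 ^ n * Real.exp (-n / 2 ^ (m + 1))) := by gcongr; exact two_sub_half_pow_pow_le m n
    _ ≤ 2 * 2 ^ n * Real.exp (-n / 2 ^ (x + 1)) := by
        rw [← mul_assoc]
        refine mul_le_mul_of_nonneg_left (Real.exp_le_exp.mpr ?_) (by positivity)
        rw [neg_div, neg_div, neg_le_neg_iff]
        exact div_le_div_of_nonneg_left (by positivity) (by positivity) hpow

theorem card_filter_maxRun_le_log {n : ℕ} (hn : 1 ≤ n) (ε : ℝ) :
    (#(univ.filter fun w : Fin n → Fin 2 =>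
        (maxRun (List.ofFn w) : ℝ) ≤ (1 - ε) * (Real.log n / Real.log 2)) : ℝ) ≤
      2 * 2 ^ n * Real.exp (-(n ^ ε / 2)) := by
  have hnpos : (0 : ℝ) < n := by positivity
  have hexponent : (2 : ℝ) ^ ((1 - ε) * (Real.log n / Real.log 2) + 1) = 2 * n ^ (1 - ε) := by
    rw [Real.rpow_add_one two_ne_zero, Real.rpow_def_of_pos two_pos, Real.rpow_def_of_pos hnpos,
      mul_comm]
    field_simp
  have hratio : -(n : ℝ) / (2 * n ^ (1 - ε)) = -(n ^ ε / 2) := by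
    rw [Real.rpow_sub hnpos, Real.rpow_one]
    field_simp
  simpa only [hexponent, hratio] using
    card_filter_maxRun_le hn ((1 - ε) * (Real.log n / Real.log 2))

/-- Every proper suffix meets a letter other than `a` before `l` leaves its prefix `aᴹ`, and `a`
is the least letter. -/
theorem isLyndon_of_forall_exists_ne {α : Type*} [LinearOrder α] {a : α} (ha : ∀ x, a ≤ x)
    {M : ℕ} {l : List α} (hpre : ∀ k (hk : k < l.length), k < M → l[k] = a)
    (hsuf : ∀ i, 0 < i → i < l.length → ∃ j < M, ∃ h : i + j < l.length, l[i + j] ≠ a) :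
    IsLyndon l := by
  intro i hi hil
  have hex := hsuf i hi hil
  obtain ⟨hjM, hjl, hja⟩ := Nat.find_spec hex
  have hmin : ∀ k < Nat.find hex, ∀ h : i + k < l.length, l[i + k] = a :=
    fun k hk h => by_contra fun hne => Nat.find_min hex hk ⟨by omega, h, hne⟩
  refine List.lt_iff_exists.mpr (Or.inr ⟨Nat.find hex, by omega, by rw [List.length_drop]; omega,
    fun k hk => ?_, ?_⟩)
  · rw [List.getElem_drop, hpre k _ (by omega), hmin k hk]
  · rw [List.getElem_drop, hpre _ _ hjM]
    exact (ha _).lt_of_ne (Ne.symm hja)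

noncomputable def zeroBlockFreeWords (M L : ℕ) : Finset (Fin L → Fin 2) :=
  univ.filter fun t => ∀ i, i + M ≤ L → ∃ j < M, wordAt t (i + j) ≠ 0

/-- The word `0ᴹ 1 t 1`. -/
def lyndonPad (M : ℕ) {L : ℕ} (t : Fin L → Fin 2) : Fin (M + L + 2) → Fin 2 :=
  fun k => if (k : ℕ) < M then 0
    else if (k : ℕ) = M ∨ (k : ℕ) = M + L + 1 then 1 else wordAt t (k - (M + 1))

theorem lyndonPad_mem_lyndonWords {M L : ℕ} {t : Fin L → Fin 2}
    (ht : t ∈ zeroBlockFreeWords M L) : lyndonPad M t ∈ lyndonWords 2 (M + L + 2) := by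
  simp only [zeroBlockFreeWords, mem_filter, mem_univ, true_and] at ht
  simp only [lyndonWords, mem_filter, mem_univ, true_and]
  refine isLyndon_of_forall_exists_ne Fin.zero_le (M := M) (fun k hk hkM => ?_) ?_
  · rw [List.getElem_ofFn]
    simp [lyndonPad, hkM]
  intro i hi hil
  simp only [List.length_ofFn] at hil
  rcases le_or_gt i M with hiM | hiM
  · exact ⟨M - i, by omega, by simp; omega, by
    rw [List.getElem_ofFn]; simp [lyndonPad, show i + (M - i) = M by omega]⟩
  rcases lt_or_ge (M + L + 1) (i + M) with hend | hend
  · refine ⟨M + L + 1 - i, by omega, by simp; omega, ?_⟩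
    rw [List.getElem_ofFn]
    simp [lyndonPad, show i + (M + L + 1 - i) = M + L + 1 by omega, show ¬ M + L + 1 < M by omega]
  obtain ⟨j, hjM, hj⟩ := ht (i - (M + 1)) (by omega)
  refine ⟨j, hjM, by simp; omega, ?_⟩
  rw [List.getElem_ofFn]
  simpa [lyndonPad, show ¬ i + j < M by omega, show i + j ≠ M by omega,
    show i + j ≠ M + L + 1 by omega, show i + j - (M + 1) = i - (M + 1) + j by omega] using hj

theorem card_zeroBlockFreeWords_le_card_lyndonWords (M L : ℕ) :
    #(zeroBlockFreeWords M L) ≤ #(lyndonWords 2 (M + L + 2)) := by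
  refine card_le_card_of_injOn (lyndonPad M) (fun t ht => lyndonPad_mem_lyndonWords ht)
    fun t _ t' _ heq => funext fun k => ?_
  have hread : ∀ s : Fin L → Fin 2, lyndonPad M s ⟨M + 1 + k, by omega⟩ = s k := fun s => by
    simp [lyndonPad, show ¬ M + 1 + (k : ℕ) < M by omega, show M + 1 + (k : ℕ) ≠ M by omega,
      show M + 1 + (k : ℕ) ≠ M + L + 1 by omega, wordAt_of_lt s k.isLt]
  rw [← hread t, ← hread t', heq]

/-- Overwriting the block `[i, i + M)` of a word that vanishes there is injective in the pair
(word, new block). -/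
theorem card_zeroBlockAt_mul_le (M L i : ℕ) :
    #(univ.filter fun t : Fin L → Fin 2 => i + M ≤ L ∧ ∀ j < M, wordAt t (i + j) = 0) * 2 ^ M
      ≤ 2 ^ L := by
  have hcodom : #(univ : Finset (Fin L → Fin 2)) = 2 ^ L := by simp
  rw [← hcodom, show 2 ^ M = #(univ : Finset (Fin M → Fin 2)) by simp, ← card_product]
  refine card_le_card_of_injOn
    (fun p k => if i ≤ k ∧ (k : ℕ) < i + M then wordAt p.2 (k - i) else p.1 k)
    (fun _ _ => mem_coe.mpr (mem_univ _)) fun p hp p' hp' heq => ?_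
  simp only [coe_product, coe_filter, mem_univ, true_and, coe_univ, Set.mem_prod,
    Set.mem_ofPred_eq, Set.mem_univ, and_true] at hp hp'
  have hval := fun k => congrFun heq k
  refine Prod.ext (funext fun k => ?_) (funext fun k => ?_)
  · by_cases hk : i ≤ (k : ℕ) ∧ (k : ℕ) < i + M
    · have h0 := hp.2 (k - i) (by omega)
      have h0' := hp'.2 (k - i) (by omega)
      rw [Nat.add_sub_cancel' hk.1, wordAt_of_lt _ k.isLt] at h0 h0'
      rw [h0, h0']
    · simpa [hk] using hval k
  · have := hval ⟨i + k, by omega⟩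
    simpa [wordAt_of_lt _ k.isLt] using this

theorem two_pow_mul_two_pow_le_card_zeroBlockFreeWords (M L : ℕ) :
    2 ^ M * 2 ^ L ≤ 2 ^ M * #(zeroBlockFreeWords M L) + (L + 1) * 2 ^ L := by
  set bad := fun i => univ.filter fun t : Fin L → Fin 2 =>
    i + M ≤ L ∧ ∀ j < M, wordAt t (i + j) = 0
  have hcover : (univ : Finset (Fin L → Fin 2)) ⊆
      zeroBlockFreeWords M L ∪ (range (L + 1)).biUnion bad := by
    intro t _
    by_cases ht : t ∈ zeroBlockFreeWords M L
    · exact mem_union_left _ ht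
    simp only [zeroBlockFreeWords, mem_filter, mem_univ, true_and, not_forall, not_exists,
      not_and, not_not, exists_prop] at ht
    obtain ⟨i, hi, hzero⟩ := ht
    exact mem_union_right _ (mem_biUnion.mpr ⟨i, mem_range.mpr (by omega),
      mem_filter.mpr ⟨mem_univ _, hi, hzero⟩⟩)
  have hcard : 2 ^ L ≤ #(zeroBlockFreeWords M L) + ∑ i ∈ range (L + 1), #(bad i) := by
    calc 2 ^ L = #(univ : Finset (Fin L → Fin 2)) := by simp
      _ ≤ _ := (card_le_card hcover).trans (card_union_le _ _)
      _ ≤ _ := Nat.add_le_add_left card_biUnion_le _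
  calc 2 ^ M * 2 ^ L ≤ 2 ^ M * (#(zeroBlockFreeWords M L) + ∑ i ∈ range (L + 1), #(bad i)) :=
        Nat.mul_le_mul_left _ hcard
    _ = 2 ^ M * #(zeroBlockFreeWords M L) + ∑ i ∈ range (L + 1), #(bad i) * 2 ^ M := by
        rw [mul_add, mul_sum]
        simp only [mul_comm]
    _ ≤ 2 ^ M * #(zeroBlockFreeWords M L) + ∑ i ∈ range (L + 1), 2 ^ L := by
        gcongr with i
        exact card_zeroBlockAt_mul_le M L i
    _ = _ := by simp

/-- Take `M = log₂ n + 3`, so that `4n < 2ᴹ ≤ 8n`: then at most a quarter of the words of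
length `L = n - M - 2` contain `0ᴹ`, and `2ᴹ⁺² ≤ 32n`. -/
theorem two_pow_le_card_lyndonWords {n : ℕ} (hn : 16 ≤ n) :
    2 ^ n ≤ 64 * n * #(lyndonWords 2 n) := by
  set l := Nat.log 2 n
  have hl : 4 ≤ l := Nat.le_log_of_pow_le (by norm_num) (by norm_num; omega)
  have hlow : 2 ^ l ≤ n := Nat.pow_log_le_self 2 (by omega)
  have hhigh : n < 2 ^ (l + 1) := Nat.lt_pow_succ_log_self (by norm_num) n
  have hl5 : l + 5 ≤ n := by
    have h16 : 2 ^ l = 2 ^ (l - 4) * 16 := by rw [← pow_sub_mul_pow 2 hl]; rfl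
    have := Nat.lt_two_pow_self (n := l - 4)
    omega
  have hn' : n = (l + 3) + (n - (l + 5)) + 2 := by omega
  have hlyndon := card_zeroBlockFreeWords_le_card_lyndonWords (l + 3) (n - (l + 5))
  rw [← hn'] at hlyndon
  have hunion := two_pow_mul_two_pow_le_card_zeroBlockFreeWords (l + 3) (n - (l + 5))
  have hsplit : 2 ^ n = 4 * 2 ^ (l + 3) * 2 ^ (n - (l + 5)) := by
    conv_lhs => rw [hn']
    ring
  have hM : 4 * n < 2 ^ (l + 3) ∧ 2 ^ (l + 3) ≤ 8 * n := by
    have h8 : 2 ^ (l + 3) = 4 * 2 ^ (l + 1) ∧ 2 ^ (l + 3) = 8 * 2 ^ l := by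
      constructor <;> ring
    omega
  have hL : 4 * (n - (l + 5) + 1) * 2 ^ (n - (l + 5)) ≤ 2 ^ (l + 3) * 2 ^ (n - (l + 5)) :=
    Nat.mul_le_mul_right _ (by omega)
  have hgood : 3 * 2 ^ (n - (l + 5)) ≤ 4 * #(zeroBlockFreeWords (l + 3) (n - (l + 5))) :=
    Nat.le_of_mul_le_mul_left (c := 2 ^ (l + 3)) (by nlinarith) (by positivity)
  nlinarith

theorem eventually_le_exp_rpow_div_four {ε : ℝ} (hε : 0 < ε) :
    ∀ᶠ n : ℕ in Filter.atTop, (n : ℝ) ≤ Real.exp ((n : ℝ) ^ ε / 4) := by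
  have hbound := (isLittleO_rpow_exp_pos_mul_atTop ε⁻¹ (by norm_num : (0 : ℝ) < 1 / 4)).bound
    one_pos
  have htendsto := (tendsto_rpow_atTop hε).comp tendsto_natCast_atTop_atTop
  filter_upwards [htendsto.eventually hbound] with n hn
  simp only [Function.comp_apply, Real.norm_eq_abs, one_mul] at hn
  rw [Real.rpow_rpow_inv (by positivity) hε.ne', Real.abs_exp, abs_of_nonneg (by positivity)] at hn
  simpa [div_eq_inv_mul, mul_comm] using hn

theorem stmt_11 (ε : ℝ) (hε : 0 < ε) :
    ∃ K : ℝ, 0 < K ∧ ∃ n₀ : ℕ, ∀ n : ℕ, n₀ ≤ n →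
      (((lyndonWords 2 n).filter fun w =>
          (maxRun (List.ofFn w) : ℝ) ≤ (1 - ε) * (Real.log n / Real.log 2)).card : ℝ)
        / ((lyndonWords 2 n).card : ℝ)
      ≤ K * Real.exp (-(n : ℝ) ^ ε / 4) := by
  obtain ⟨n₀, hn₀⟩ := Filter.eventually_atTop.mp
    ((eventually_le_exp_rpow_div_four hε).and (Filter.eventually_ge_atTop 16))
  refine ⟨128, by norm_num, n₀, fun n hn => ?_⟩
  obtain ⟨hexp, hn16⟩ := hn₀ n hn
  have hlyndon : (2 : ℝ) ^ n / (64 * n) ≤ #(lyndonWords 2 n) := by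
    rw [div_le_iff₀ (by positivity)]
    exact_mod_cast (two_pow_le_card_lyndonWords hn16).trans_eq (by ring)
  have hnum : (#((lyndonWords 2 n).filter fun w =>
      (maxRun (List.ofFn w) : ℝ) ≤ (1 - ε) * (Real.log n / Real.log 2)) : ℝ) ≤
        2 * 2 ^ n * Real.exp (-(n ^ ε / 2)) :=
    le_trans (by exact_mod_cast card_le_card (filter_subset_filter _ (subset_univ _)))
      (card_filter_maxRun_le_log (by omega) ε)
  calc _ ≤ (2 * 2 ^ n * Real.exp (-(n ^ ε / 2))) / ((2 : ℝ) ^ n / (64 * n)) :=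
        div_le_div₀ (by positivity) hnum (by positivity) hlyndon
    _ = 128 * n * Real.exp (-(n ^ ε / 2)) := by field_simp; norm_num
    _ ≤ 128 * Real.exp (n ^ ε / 4) * Real.exp (-(n ^ ε / 2)) := by gcongr
    _ = 128 * Real.exp (-(n : ℝ) ^ ε / 4) := by rw [mul_assoc, ← Real.exp_add]; ring_nf
end

section
/- Consider the alphabet {a, b} with a < b, and for each n let P̃_n be the uniform probability on the set of Lyndon words of length n, M_n the length of the longest run, and M_n^a the length of the longest run of the letter a. For every real A with 1 < A ≤ 2, P̃_n(M_n^a ≥ A·log₂ n) ≤ P̃_n(M_n ≥ A·log₂ n) = O(n^{1−A}) as n → ∞; that is, there exist K > 0 and n_0 such that for all n ≥ n_0, P̃_n(M_n ≥ A·log₂ n) ≤ K·n^{1−A}. -/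
open scoped Classical

/-- The length of the longest run of the letter `c` in a word. -/
noncomputable def maxRunOf {α : Type*} (c : α) (l : List α) : ℕ :=
  sSup {m | List.replicate m c <:+: l}

/-!
A Lyndon word is strictly smaller than each of its nontrivial rotations, so two rotations of
Lyndon words of length `n` coincide only trivially: the Lyndon words with a run of length `m`
yield `n` times as many distinct words with a cyclic run of length `m`, of which there are at
most `2n·2^(n-m)`. Conversely every word is a rotation of its least rotation, which is Lyndon
or periodic, and there are at most `n·2^(n/2)` periodic words; hence there are at least
`2^n/(2n)` Lyndon words once `n ≥ 64`. With `m = ⌈A log₂ n⌉` the proportion is therefore at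
most `4n/2^m ≤ 4n^(1-A)`.
-/

open Finset

namespace List

variable {α : Type*} {r : α → α → Prop}

theorem Lex.append_append_of_length_le {x y : List α} (h : Lex r x y)
    (hlen : y.length ≤ x.length) (z z' : List α) : Lex r (x ++ z) (y ++ z') := by
  induction h with
  | nil => simp at hlen
  | cons _ ih => exact .cons (ih (by simpa using hlen))
  | rel hab => exact .rel hab

theorem Lex.isPrefix_or_forall_append {x y : List α} (h : Lex r x y) :
    x <+: y ∨ ∀ z, Lex r (x ++ z) y := by
  induction h with
  | nil => exact .inl (nil_prefix)
  | cons _ ih =>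
    rcases ih with hpre | happ
    · exact .inl (cons_prefix_cons.mpr ⟨rfl, hpre⟩)
    · exact .inr fun z => .cons (happ z)
  | rel hab => exact .inr fun _ => .rel hab

end List

section Lyndon

open List

variable {α : Type*} [LinearOrder α] {l : List α}

theorem IsLyndon.lt_rotate (hl : IsLyndon l) {k : ℕ} (hk0 : 0 < k) (hk : k < l.length) :
    l < l.rotate k := by
  rw [rotate_eq_drop_append_take hk.le]
  simpa using (hl k hk0 hk).append_append_of_length_le (by simp) [] (l.take k)

theorem isLyndon_or_rotate_eq_self (hmin : ∀ k < l.length, ¬ l.rotate k < l) :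
    IsLyndon l ∨ ∃ k, 0 < k ∧ k < l.length ∧ l.rotate k = l := by
  refine or_iff_not_imp_left.mpr fun hl => ?_
  obtain ⟨i, hi0, hil, hnlt⟩ : ∃ i, 0 < i ∧ i < l.length ∧ ¬ l < l.drop i := by
    simpa [IsLyndon] using hl
  set p := l.take i
  set s := l.drop i
  have hps : p ++ s = l := take_append_drop i l
  have hp : p.length = i := by simp [p]; omega
  have hrot : l.rotate i = s ++ p := by rw [← hps, ← hp, rotate_append_length_eq]
  have hsl : s < l := by
    refine (lt_or_gt_of_ne fun h => ?_).resolve_right hnlt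
    have := congrArg length h
    simp [s] at this
    omega
  rcases List.Lex.isPrefix_or_forall_append hsl with ⟨t, hst⟩ | hlt
  · have ht : t.length = p.length := by
      have := congrArg length hst
      simp only [length_append, ← hps] at this
      omega
    rcases lt_trichotomy p t with hpt | rfl | htp
    · exact absurd (hrot ▸ hst ▸ Lex.append_left _ hpt s) (hmin i hil)
    · exact ⟨i, hi0, hil, hrot.trans hst⟩
    · have hrot' : l.rotate s.length = t ++ s := by rw [← hst, rotate_append_length_eq]
      refine absurd ?_ (hmin s.length (by simp [s]; omega))
      rw [hrot', ← hps]
      exact htp.append_append_of_length_le ht.ge s s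
  · exact absurd (hrot ▸ hlt p) (hmin i hil)

end Lyndon

section Rotation

variable {α : Type*} {n : ℕ}

def rotateFn (w : Fin n → α) (j : Fin n) : Fin n → α := fun i => w (i + j)

@[simp]
theorem rotateFn_zero [NeZero n] (w : Fin n → α) : rotateFn w 0 = w := by
  funext i; simp [rotateFn]

theorem rotateFn_rotateFn (w : Fin n → α) (j k : Fin n) :
    rotateFn (rotateFn w j) k = rotateFn w (k + j) := by
  funext i; simp [rotateFn, add_assoc]

theorem rotateFn_rotateFn_neg [NeZero n] (w : Fin n → α) (j : Fin n) :
    rotateFn (rotateFn w j) (-j) = w := by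
  rw [rotateFn_rotateFn, neg_add_cancel, rotateFn_zero]

theorem ofFn_rotateFn (w : Fin n → α) (j : Fin n) :
    List.ofFn (rotateFn w j) = (List.ofFn w).rotate j := by
  refine List.ext_getElem (by simp) fun i h _ => ?_
  simp [rotateFn, Fin.add_def]

theorem eq_zero_of_isLyndon_rotateFn [NeZero n] [LinearOrder α] {w : Fin n → α} {j : Fin n}
    (hw : IsLyndon (List.ofFn w)) (hwj : IsLyndon (List.ofFn (rotateFn w j))) : j = 0 := by
  by_contra hj
  have hlt : List.ofFn w < List.ofFn (rotateFn w j) := by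
    rw [ofFn_rotateFn]
    exact hw.lt_rotate (Fin.pos_iff_ne_zero.mpr hj) (by simp)
  have hgt : List.ofFn (rotateFn w j) < List.ofFn w := by
    conv_rhs => rw [← rotateFn_rotateFn_neg w j]
    rw [ofFn_rotateFn (rotateFn w j)]
    exact hwj.lt_rotate (Fin.pos_iff_ne_zero.mpr (neg_ne_zero.mpr hj)) (by simp)
  exact lt_asymm hlt hgt

theorem injOn_rotateFn_isLyndon [NeZero n] [LinearOrder α] :
    Set.InjOn (fun p : (Fin n → α) × Fin n => rotateFn p.1 p.2)
      {p | IsLyndon (List.ofFn p.1)} := by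
  rintro ⟨w, j⟩ hw ⟨w', j'⟩ hw' (h : rotateFn w j = rotateFn w' j')
  have hrot : rotateFn w (-j' + j) = w' := by
    rw [← rotateFn_rotateFn, h, rotateFn_rotateFn_neg]
  have hjj : -j' + j = 0 := eq_zero_of_isLyndon_rotateFn hw (hrot ▸ hw')
  obtain rfl : j' = j := by simpa [neg_add_eq_zero] using hjj
  simp_all

end Rotation

section MaxRun

variable {α : Type*} (l : List α)

theorem bddAbove_replicate_infix : BddAbove {m | ∃ c : α, List.replicate m c <:+: l} :=
  ⟨l.length, fun _ ⟨_, hc⟩ => by simpa using hc.length_le⟩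

theorem maxRun_le_length : maxRun l ≤ l.length :=
  csSup_le' fun _ ⟨_, hc⟩ => by simpa using hc.length_le

theorem maxRunOf_le_maxRun (c : α) : maxRunOf c l ≤ maxRun l :=
  csSup_le_csSup (bddAbove_replicate_infix l) ⟨0, by simp⟩ fun _ hm => ⟨c, hm⟩

theorem exists_replicate_infix_of_le_maxRun [Nonempty α] {m : ℕ} (hm : m ≤ maxRun l) :
    ∃ c, List.replicate m c <:+: l := by
  obtain ⟨c, hc⟩ : ∃ c, List.replicate (maxRun l) c <:+: l :=
    Nat.sSup_mem (s := {m | ∃ c : α, List.replicate m c <:+: l})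
      ⟨0, Classical.arbitrary α, by simp⟩ (bddAbove_replicate_infix l)
  refine ⟨c, List.IsInfix.trans ?_ hc⟩
  rw [← Nat.add_sub_cancel' hm, List.replicate_add]
  exact (List.prefix_append _ _).isInfix

end MaxRun

section Counting

open Fin.NatCast

variable {α : Type*} [Fintype α]

theorem card_le_pow_of_injOn_comp {ι κ : Type*} [Fintype κ] (F : Finset (ι → α)) (g : κ → ι)
    (hF : Set.InjOn (fun v => v ∘ g) (F : Set (ι → α))) :
    #F ≤ Fintype.card α ^ Fintype.card κ := by
  simpa using card_le_card_of_injOn (t := univ) _ (fun _ _ => mem_coe.mpr (mem_univ _)) hF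

variable {n : ℕ} [NeZero n]

theorem card_filter_run_le {m : ℕ} (hm : m ≤ n) (p : Fin n) (c : α) :
    #{v : Fin n → α | ∀ k < m, v (p + (k : Fin n)) = c} ≤ Fintype.card α ^ (n - m) := by
  have hg := card_le_pow_of_injOn_comp {v : Fin n → α | ∀ k < m, v (p + (k : Fin n)) = c}
    (fun k : Fin (n - m) => p + ((m + k : ℕ) : Fin n)) ?_
  · simpa using hg
  intro v hv v' hv' h
  simp only [coe_filter, mem_univ, true_and, Set.mem_ofPred_eq] at hv hv'
  funext i
  obtain ⟨r, hr, rfl⟩ : ∃ r < n, p + (r : Fin n) = i := ⟨(i - p).val, (i - p).2, by simp⟩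
  rcases lt_or_ge r m with hrm | hrm
  · rw [hv r hrm, hv' r hrm]
  · have := congrFun h ⟨r - m, by omega⟩
    simp only [Function.comp_apply] at this
    rwa [Nat.add_sub_cancel' hrm] at this

-- Runs may wrap around the end of the word, which makes this set closed under rotation.
variable (α) in
noncomputable def cyclicRunWords (n m : ℕ) [NeZero n] : Finset (Fin n → α) :=
  {v | ∃ (c : α) (p : Fin n), ∀ k < m, v (p + (k : Fin n)) = c}

theorem card_cyclicRunWords_le {m : ℕ} (hm : m ≤ n) :
    #(cyclicRunWords α n m) ≤ Fintype.card α * n * Fintype.card α ^ (n - m) := by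
  have hsub : cyclicRunWords α n m ⊆
      (univ : Finset (α × Fin n)).biUnion
        fun cp => {v | ∀ k < m, v (cp.2 + (k : Fin n)) = cp.1} := by
    intro v hv
    obtain ⟨c, p, h⟩ := (mem_filter.mp hv).2
    exact mem_biUnion.mpr ⟨(c, p), mem_univ _, mem_filter.mpr ⟨mem_univ _, h⟩⟩
  calc #(cyclicRunWords α n m)
      _ ≤ ∑ cp : α × Fin n, #{v : Fin n → α | ∀ k < m, v (cp.2 + (k : Fin n)) = cp.1} :=
        (card_le_card hsub).trans card_biUnion_le
      _ ≤ ∑ _cp : α × Fin n, Fintype.card α ^ (n - m) :=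
        sum_le_sum fun cp _ => card_filter_run_le hm cp.2 cp.1
      _ = Fintype.card α * n * Fintype.card α ^ (n - m) := by simp

theorem rotateFn_mem_cyclicRunWords {m : ℕ} {v : Fin n → α} (hv : v ∈ cyclicRunWords α n m)
    (j : Fin n) : rotateFn v j ∈ cyclicRunWords α n m := by
  obtain ⟨c, p, h⟩ := (mem_filter.mp hv).2
  refine mem_filter.mpr ⟨mem_univ _, c, p - j, fun k hk => ?_⟩
  simpa [rotateFn, add_right_comm _ _ j] using h k hk

theorem mem_cyclicRunWords_of_le_maxRun {m : ℕ} {w : Fin n → α}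
    (h : m ≤ maxRun (List.ofFn w)) : w ∈ cyclicRunWords α n m := by
  have : Nonempty α := ⟨w 0⟩
  obtain ⟨c, u, t, hut⟩ := exists_replicate_infix_of_le_maxRun _ h
  have hlen : u.length + (m + t.length) = n := by simpa using congrArg List.length hut
  refine mem_filter.mpr ⟨mem_univ _, c, (u.length : Fin n), fun k hk => ?_⟩
  have hpos : ((u.length : Fin n) + k) = ⟨u.length + k, by omega⟩ := by
    ext; simp [Fin.val_add, Nat.mod_eq_of_lt (show u.length + k < n by omega)]
  have hget := congrArg (·[u.length + k]?) hut
  simp [List.getElem?_append, hk, show u.length + k < n by omega] at hget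
  rw [hpos, ← hget]

end Counting

section LyndonCounting

variable {n : ℕ} [NeZero n]

theorem card_filter_le_maxRun_le {q m : ℕ} (hm : m ≤ n) :
    #{w ∈ lyndonWords q n | m ≤ maxRun (List.ofFn w)} ≤ q * q ^ (n - m) := by
  set F := {w ∈ lyndonWords q n | m ≤ maxRun (List.ofFn w)}
  have hF : #F * n ≤ #(cyclicRunWords (Fin q) n m) := by
    simpa using card_le_card_of_injOn (s := F ×ˢ univ) (fun p => rotateFn p.1 p.2)
      (fun p hp => rotateFn_mem_cyclicRunWords
        (mem_cyclicRunWords_of_le_maxRun (mem_filter.mp (mem_product.mp hp).1).2) p.2)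
      (injOn_rotateFn_isLyndon.mono fun p hp =>
        (mem_filter.mp (mem_filter.mp (mem_product.mp hp).1).1).2)
  have hcyc := card_cyclicRunWords_le (α := Fin q) hm
  rw [Fintype.card_fin] at hcyc
  exact Nat.le_of_mul_le_mul_right (by linarith) (Nat.pos_of_neZero n)

variable {α : Type*}

theorem eq_of_rotateFn_eq_self {v v' : Fin n → α} {j : Fin n} {k : ℕ} (hj : j ≠ 0)
    (hjk : j.val ≤ k) (hv : rotateFn v j = v) (hv' : rotateFn v' j = v')
    (h : ∀ i : Fin n, i.val < k → v i = v' i) : v = v' := by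
  funext i
  induction hi : i.val using Nat.strong_induction_on generalizing i with
  | _ r ih =>
    rcases lt_or_ge r k with hrk | hrk
    · exact h i (hi ▸ hrk)
    · have hji : j ≤ i := Fin.le_def.mpr (by omega)
      have hsub : (i - j).val = r - j.val := by rw [Fin.coe_sub_iff_le.mpr hji, hi]
      have hj0 := Fin.pos_iff_ne_zero.mpr hj
      calc v i = v (i - j) := by simpa [rotateFn] using congrFun hv (i - j)
        _ = v' (i - j) := ih _ (by omega) _ hsub
        _ = v' i := by simpa [rotateFn] using (congrFun hv' (i - j)).symm

theorem card_filter_rotateFn_eq_self_le [Fintype α] [DecidableEq α] {j : Fin n} (hj : j ≠ 0) :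
    #{v : Fin n → α | rotateFn v j = v} ≤ Fintype.card α ^ (n / 2) := by
  obtain ⟨j', hj', hj'n, hper⟩ : ∃ j' : Fin n, j' ≠ 0 ∧ j'.val ≤ n / 2 ∧
      ∀ v : Fin n → α, rotateFn v j = v → rotateFn v j' = v := by
    rcases le_or_gt j.val (n / 2) with hjn | hjn
    · exact ⟨j, hj, hjn, fun _ => id⟩
    · refine ⟨-j, neg_ne_zero.mpr hj, ?_, fun v hv => ?_⟩
      · rw [Fin.val_neg', Nat.mod_eq_of_lt (by omega)]
        omega
      · conv_lhs => rw [← hv]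
        exact rotateFn_rotateFn_neg v j
  simpa using card_le_pow_of_injOn_comp _ (Fin.castLE (Nat.div_le_self n 2))
    fun v hv v' hv' h => eq_of_rotateFn_eq_self hj' hj'n (hper v (mem_filter.mp hv).2)
      (hper v' (mem_filter.mp hv').2) fun i hi => congrFun h ⟨i, hi⟩

-- Every word is a rotation of its least rotation, and that one is Lyndon or periodic.
theorem pow_le_mul_card_lyndonWords_add {q : ℕ} :
    q ^ n ≤ n * (#(lyndonWords q n) + n * q ^ (n / 2)) := by
  set P := (univ.filter (· ≠ (0 : Fin n))).biUnion
    fun j => {v : Fin n → Fin q | rotateFn v j = v}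
  have hP : #P ≤ n * q ^ (n / 2) := calc
    #P ≤ ∑ j ∈ univ.filter (· ≠ (0 : Fin n)), #{v : Fin n → Fin q | rotateFn v j = v} :=
      card_biUnion_le
    _ ≤ ∑ _j ∈ univ.filter (· ≠ (0 : Fin n)), q ^ (n / 2) :=
      sum_le_sum fun j hj => by
        simpa using card_filter_rotateFn_eq_self_le (α := Fin q) (mem_filter.mp hj).2
    _ ≤ n * q ^ (n / 2) := by
      rw [sum_const, smul_eq_mul]
      exact Nat.mul_le_mul_right _ ((card_filter_le _ _).trans (by simp))
  have hsurj : Set.SurjOn (fun p : (Fin n → Fin q) × Fin n => rotateFn p.1 p.2)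
      ↑((lyndonWords q n ∪ P) ×ˢ (univ : Finset (Fin n)))
      ↑(univ : Finset (Fin n → Fin q)) := by
    intro w _
    obtain ⟨j₀, -, hj₀⟩ :=
      exists_min_image univ (fun j => List.ofFn (rotateFn w j)) univ_nonempty
    set v := rotateFn w j₀
    have hmin : ∀ k < (List.ofFn v).length, ¬ (List.ofFn v).rotate k < List.ofFn v := by
      intro k hk
      rw [List.length_ofFn] at hk
      rw [← ofFn_rotateFn v ⟨k, hk⟩, rotateFn_rotateFn, not_lt]
      exact hj₀ _ (mem_univ _)
    refine ⟨(v, -j₀), mem_product.mpr ⟨?_, mem_univ _⟩, rotateFn_rotateFn_neg w j₀⟩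
    rcases isLyndon_or_rotate_eq_self hmin with hv | ⟨k, hk0, hk, hvk⟩
    · exact mem_union_left _ (mem_filter.mpr ⟨mem_univ _, hv⟩)
    · rw [List.length_ofFn] at hk
      refine mem_union_right _ (mem_biUnion.mpr ⟨⟨k, hk⟩, ?_, ?_⟩)
      · exact mem_filter.mpr ⟨mem_univ _, Fin.pos_iff_ne_zero.mp hk0⟩
      · exact mem_filter.mpr ⟨mem_univ _, List.ofFn_injective ((ofFn_rotateFn _ _).trans hvk)⟩
  calc q ^ n = #(univ : Finset (Fin n → Fin q)) := by
        rw [card_univ, Fintype.card_fun, Fintype.card_fin, Fintype.card_fin]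
    _ ≤ #(lyndonWords q n ∪ P) * n := by
        refine (card_le_card_of_surjOn _ hsurj).trans_eq ?_
        rw [card_product, card_univ, Fintype.card_fin]
    _ ≤ n * (#(lyndonWords q n) + n * q ^ (n / 2)) := by
      rw [mul_comm]
      exact Nat.mul_le_mul_left _ ((card_union_le _ _).trans (by omega))

end LyndonCounting

section Binary

theorem eighteen_mul_sq_le_two_pow {k : ℕ} (hk : 32 ≤ k) : 18 * k ^ 2 ≤ 2 ^ k := by
  induction k, hk using Nat.le_induction with
  | base => norm_num
  | succ k hk ih =>
    calc 18 * (k + 1) ^ 2 ≤ 2 * (18 * k ^ 2) := by nlinarith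
      _ ≤ 2 ^ (k + 1) := by rw [pow_succ 2 k]; omega

theorem two_mul_sq_mul_two_pow_half_le {n : ℕ} (hn : 64 ≤ n) :
    2 * n ^ 2 * 2 ^ (n / 2) ≤ 2 ^ n := by
  have h18 := eighteen_mul_sq_le_two_pow (show 32 ≤ n / 2 by omega)
  have hsq : 2 * n ^ 2 ≤ 18 * (n / 2) ^ 2 := by
    have : n ≤ 3 * (n / 2) := by omega
    nlinarith
  calc 2 * n ^ 2 * 2 ^ (n / 2) ≤ 2 ^ (n / 2) * 2 ^ (n / 2) := by gcongr; omega
    _ = 2 ^ (n / 2 + n / 2) := (pow_add _ _ _).symm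
    _ ≤ 2 ^ n := Nat.pow_le_pow_right (by norm_num) (by omega)

theorem two_pow_le_two_mul_card_lyndonWords {n : ℕ} [NeZero n] (hn : 64 ≤ n) :
    2 ^ n ≤ 2 * n * #(lyndonWords 2 n) := by
  have := pow_le_mul_card_lyndonWords_add (n := n) (q := 2)
  have := two_mul_sq_mul_two_pow_half_le hn
  nlinarith

theorem card_filter_le_maxRun_mul_two_pow_le {n : ℕ} [NeZero n] (hn : 64 ≤ n) (m : ℕ) :
    #{w ∈ lyndonWords 2 n | m ≤ maxRun (List.ofFn w)} * 2 ^ m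
      ≤ 4 * n * #(lyndonWords 2 n) := by
  rcases le_or_gt m n with hmn | hnm
  · calc #{w ∈ lyndonWords 2 n | m ≤ maxRun (List.ofFn w)} * 2 ^ m
        _ ≤ 2 * 2 ^ (n - m) * 2 ^ m := by gcongr; exact card_filter_le_maxRun_le hmn
        _ = 2 * 2 ^ n := by rw [mul_assoc, ← pow_add, Nat.sub_add_cancel hmn]
        _ ≤ 4 * n * #(lyndonWords 2 n) := by linarith [two_pow_le_two_mul_card_lyndonWords hn]
  · have hempty : {w ∈ lyndonWords 2 n | m ≤ maxRun (List.ofFn w)} = ∅ :=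
      filter_false_of_mem fun w _ hw => by
        have := maxRun_le_length (List.ofFn w)
        simp only [List.length_ofFn] at this
        omega
    simp [hempty]

theorem card_filter_le_maxRun_div_card_le {n : ℕ} (hn : 64 ≤ n) (x : ℝ) :
    (#{w ∈ lyndonWords 2 n | x ≤ maxRun (List.ofFn w)} : ℝ) / #(lyndonWords 2 n)
      ≤ 4 * n / (2 : ℝ) ^ x := by
  have : NeZero n := ⟨by omega⟩
  have hfilter : {w ∈ lyndonWords 2 n | x ≤ maxRun (List.ofFn w)} =
      {w ∈ lyndonWords 2 n | ⌈x⌉₊ ≤ maxRun (List.ofFn w)} :=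
    filter_congr fun w _ => Nat.ceil_le.symm
  have hcard : 0 < #(lyndonWords 2 n) := by
    have := two_pow_le_two_mul_card_lyndonWords hn
    refine Nat.pos_of_ne_zero fun h => ?_
    simp [h] at this
  calc (#{w ∈ lyndonWords 2 n | x ≤ maxRun (List.ofFn w)} : ℝ) / #(lyndonWords 2 n)
      _ ≤ 4 * n / (2 : ℝ) ^ ⌈x⌉₊ := by
        rw [div_le_div_iff₀ (by positivity) (by positivity), hfilter]
        exact_mod_cast card_filter_le_maxRun_mul_two_pow_le hn _
      _ ≤ 4 * n / (2 : ℝ) ^ x := by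
        rw [← Real.rpow_natCast]
        gcongr
        · norm_num
        · exact Nat.le_ceil x

end Binary

theorem stmt_12_general (A : ℝ) :
    (∀ n : ℕ,
      (((lyndonWords 2 n).filter fun w =>
          A * (Real.log n / Real.log 2) ≤ (maxRunOf (0 : Fin 2) (List.ofFn w) : ℝ)).card : ℝ)
        / ((lyndonWords 2 n).card : ℝ)
      ≤ (((lyndonWords 2 n).filter fun w =>
          A * (Real.log n / Real.log 2) ≤ (maxRun (List.ofFn w) : ℝ)).card : ℝ)
        / ((lyndonWords 2 n).card : ℝ))
    ∧ ∃ K : ℝ, 0 < K ∧ ∃ n₀ : ℕ, ∀ n : ℕ, n₀ ≤ n →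
        (((lyndonWords 2 n).filter fun w =>
            A * (Real.log n / Real.log 2) ≤ (maxRun (List.ofFn w) : ℝ)).card : ℝ)
          / ((lyndonWords 2 n).card : ℝ)
        ≤ K * (n : ℝ) ^ (1 - A) := by
  refine ⟨fun n => ?_, 4, by norm_num, 64, fun n hn => ?_⟩
  · refine div_le_div_of_nonneg_right ?_ (Nat.cast_nonneg _)
    exact_mod_cast card_le_card <| monotone_filter_right _ fun w _ hw =>
      le_trans hw (Nat.cast_le.mpr (maxRunOf_le_maxRun _ _))
  · have hn0 : (0 : ℝ) < n := by norm_cast; omega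
    have hpow : (2 : ℝ) ^ (A * (Real.log n / Real.log 2)) = n ^ A := by
      rw [Real.rpow_def_of_pos two_pos, Real.rpow_def_of_pos hn0]
      field_simp
    calc _ ≤ 4 * n / (2 : ℝ) ^ (A * (Real.log n / Real.log 2)) :=
          card_filter_le_maxRun_div_card_le hn _
      _ = 4 * n ^ (1 - A) := by rw [hpow, Real.rpow_sub hn0, Real.rpow_one, mul_div_assoc]

theorem stmt_12 (A : ℝ) (hA1 : 1 < A) (hA2 : A ≤ 2) :
    (∀ n : ℕ,
      (((lyndonWords 2 n).filter fun w =>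
          A * (Real.log n / Real.log 2) ≤ (maxRunOf (0 : Fin 2) (List.ofFn w) : ℝ)).card : ℝ)
        / ((lyndonWords 2 n).card : ℝ)
      ≤ (((lyndonWords 2 n).filter fun w =>
          A * (Real.log n / Real.log 2) ≤ (maxRun (List.ofFn w) : ℝ)).card : ℝ)
        / ((lyndonWords 2 n).card : ℝ))
    ∧ ∃ K : ℝ, 0 < K ∧ ∃ n₀ : ℕ, ∀ n : ℕ, n₀ ≤ n →
        (((lyndonWords 2 n).filter fun w =>
            A * (Real.log n / Real.log 2) ≤ (maxRun (List.ofFn w) : ℝ)).card : ℝ)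
          / ((lyndonWords 2 n).card : ℝ)
        ≤ K * (n : ℝ) ^ (1 - A) :=
  stmt_12_general A
end
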